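/- Assume $\mathrm{ad}_\pg X$ is skew-symmetric for every $X\in\pg$ and let $\delta_{\mu_\pg}(A)=-\theta(A)\mu_\pg$. Then for every symmetric $A$, $\langle\delta_{\mu_\pg}^t\delta_{\mu_\pg}(A),A\rangle = -4\sum_i\langle\Mm_{\mu_\pg}AX_i,AX_i\rangle + \langle\mathrm{Cas}_\pg(A),A\rangle$, where $\Mm_{\mu_\pg}=\tfrac14\sum_i(\mathrm{ad}_\pg X_i)^2$ and $\mathrm{Cas}_\pg(A)=-\sum_i[\mathrm{ad}_\pg X_i,[\mathrm{ad}_\pg X_i,A]]$. -/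

import Mathlib

/-!
`δ(A)(Xᵢ, ·) = ad(AXᵢ) + [ad Xᵢ, A]` is the sum of a skew-symmetric and a symmetric operator,
which are orthogonal for the trace inner product, so `|δ(A)|²` splits as
`∑ |ad(AXᵢ)|² + ∑ |[ad Xᵢ, A]|²`. Since `μ` is alternating and each `ad X` is skew, the first sum
is `-4 ∑ ⟨M AXᵢ, AXᵢ⟩`; the second is `⟨Cas(A), A⟩` because `tr([P, [P, A]] A) = -tr([P, A]²)`
and `[P, A]` is symmetric.
-/

noncomputable section

variable {V : Type*} [NormedAddCommGroup V] [InnerProductSpace ℝ V] [FiniteDimensional ℝ V]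

/-- The representation `θ(A)λ = Aλ(·,·) - λ(A·,·) - λ(·,A·)`. -/
def theta (A : Module.End ℝ V) (lam : V → V → V) : V → V → V :=
  fun X Y => A (lam X Y) - lam (A X) Y - lam X (A Y)

/-- The inner product on `Λ²p*⊗p` relative to an orthonormal basis. -/
def bip {ι : Type*} [Fintype ι] (b : OrthonormalBasis ι ℝ V) (f g : V → V → V) : ℝ :=
  ∑ i, ∑ j, (inner ℝ (f (b i) (b j)) (g (b i) (b j)) : ℝ)

/-- The trace inner product `⟨A,B⟩ = tr(A Bᵗ)` on `gl(p)`. -/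
def eip (A B : Module.End ℝ V) : ℝ :=
  LinearMap.trace ℝ V (A ∘ₗ LinearMap.adjoint (B : V →ₗ[ℝ] V))

/-- Commutator of endomorphisms. -/
def opComm (P Q : Module.End ℝ V) : Module.End ℝ V := P ∘ₗ Q - Q ∘ₗ P

/-- `Cas_p(A) = -∑ [ad_p Xᵢ, [ad_p Xᵢ, A]]`. -/
def casOp {ι : Type*} [Fintype ι] (b : OrthonormalBasis ι ℝ V)
    (μ : V →ₗ[ℝ] V →ₗ[ℝ] V) (A : Module.End ℝ V) : Module.End ℝ V :=
  -∑ i, opComm (μ (b i)) (opComm (μ (b i)) A)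

/-- `δ_{μ_p}(A) := -θ(A)μ_p`. -/
def deltaMap (μ : V →ₗ[ℝ] V →ₗ[ℝ] V) (A : Module.End ℝ V) : V → V → V :=
  fun X Y => -(theta A (fun X' Y' => μ X' Y') X Y)

open RealInnerProductSpace

section Trace

variable {ι : Type*} [Fintype ι] (b : OrthonormalBasis ι ℝ V)

lemma sum_inner_apply_eq_trace (P Q : Module.End ℝ V) :
    ∑ j, ⟪P (b j), Q (b j)⟫ = LinearMap.trace ℝ V (LinearMap.adjoint Q ∘ₗ P) := by
  rw [LinearMap.trace_eq_sum_inner _ b]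
  refine Finset.sum_congr rfl fun j _ => ?_
  rw [LinearMap.comp_apply, LinearMap.adjoint_inner_right, real_inner_comm]

lemma sum_inner_apply_eq_zero_of_adjoint_eq_neg {S T : Module.End ℝ V}
    (hS : LinearMap.adjoint S = -S) (hT : T.IsSymmetric) :
    ∑ j, ⟪S (b j), T (b j)⟫ = 0 := by
  have h₁ := sum_inner_apply_eq_trace b S T
  have h₂ := sum_inner_apply_eq_trace b T S
  rw [hT.adjoint_eq] at h₁
  rw [hS, LinearMap.neg_comp, map_neg, LinearMap.trace_comp_comm'] at h₂
  simp only [real_inner_comm (S _)] at h₂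
  linarith

lemma sum_inner_add_apply_self_of_adjoint_eq_neg {S T : Module.End ℝ V}
    (hS : LinearMap.adjoint S = -S) (hT : T.IsSymmetric) :
    ∑ j, ⟪(S + T) (b j), (S + T) (b j)⟫ =
      ∑ j, ⟪S (b j), S (b j)⟫ + ∑ j, ⟪T (b j), T (b j)⟫ := by
  have hST := sum_inner_apply_eq_zero_of_adjoint_eq_neg b hS hT
  simp only [LinearMap.add_apply, inner_add_left, inner_add_right, Finset.sum_add_distrib,
    real_inner_comm (T _) (S _)] at hST ⊢
  linarith

end Trace

lemma trace_opComm_comp (P C A : Module.End ℝ V) :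
    LinearMap.trace ℝ V (opComm P C ∘ₗ A) = -LinearMap.trace ℝ V (C ∘ₗ opComm P A) := by
  have hcyc : LinearMap.trace ℝ V (C ∘ₗ A ∘ₗ P) = LinearMap.trace ℝ V (P ∘ₗ C ∘ₗ A) := by
    rw [← LinearMap.comp_assoc, LinearMap.trace_comp_comm']
  simp only [opComm, LinearMap.sub_comp, LinearMap.comp_sub, map_sub, LinearMap.comp_assoc, hcyc]
  ring

lemma inner_apply_eq_neg_of_adjoint_eq_neg {P : Module.End ℝ V}
    (hP : LinearMap.adjoint P = -P) (x y : V) : ⟪P x, y⟫ = -⟪x, P y⟫ := by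
  rw [← LinearMap.adjoint_inner_right, hP, LinearMap.neg_apply, inner_neg_right]

lemma isSymmetric_opComm {P A : Module.End ℝ V} (hP : LinearMap.adjoint P = -P)
    (hA : A.IsSymmetric) : (opComm P A).IsSymmetric := by
  intro x y
  simp only [opComm, LinearMap.sub_apply, LinearMap.comp_apply, inner_sub_left, inner_sub_right,
    inner_apply_eq_neg_of_adjoint_eq_neg hP, hA _ _]
  ring

section Bracket

variable {ι : Type*} [Fintype ι] (b : OrthonormalBasis ι ℝ V) {μ : V →ₗ[ℝ] V →ₗ[ℝ] V}

lemma eip_casOp_self (hskew : ∀ X : V, LinearMap.adjoint (μ X) = -(μ X))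
    {A : Module.End ℝ V} (hA : A.IsSymmetric) :
    eip (casOp b μ A) A =
      ∑ i, ∑ j, ⟪opComm (μ (b i)) A (b j), opComm (μ (b i)) A (b j)⟫ := by
  rw [eip, casOp, hA.adjoint_eq, ← Module.End.mul_eq_comp, neg_mul, Finset.sum_mul, map_neg,
    map_sum, ← Finset.sum_neg_distrib]
  refine Finset.sum_congr rfl fun i _ => ?_
  rw [Module.End.mul_eq_comp, trace_opComm_comp, neg_neg, sum_inner_apply_eq_trace b,
    (isSymmetric_opComm (hskew _) hA).adjoint_eq]

lemma inner_sum_comp_apply_self (halt : μ.IsAlt)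
    (hskew : ∀ X : V, LinearMap.adjoint (μ X) = -(μ X)) (y : V) :
    ⟪(∑ k, μ (b k) ∘ₗ μ (b k)) y, y⟫ = -∑ k, ⟪μ y (b k), μ y (b k)⟫ := by
  rw [LinearMap.sum_apply, sum_inner, ← Finset.sum_neg_distrib]
  refine Finset.sum_congr rfl fun k _ => ?_
  rw [LinearMap.comp_apply, inner_apply_eq_neg_of_adjoint_eq_neg (hskew _), real_inner_comm,
    ← halt.neg, inner_neg_neg]

end Bracket

/-- in the naturally reductive case, for symmetric `A`,
`⟨δᵗδ(A), A⟩ = |δ(A)|² = -4 ∑ ⟨M_{μ_p} A Xᵢ, A Xᵢ⟩ + ⟨Cas_p(A), A⟩`,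
where `M_{μ_p} = ¼ ∑ (ad_p Xᵢ)²`. -/
theorem statement6 {n : ℕ} (b : OrthonormalBasis (Fin n) ℝ V)
    (μ : V →ₗ[ℝ] V →ₗ[ℝ] V) (halt : ∀ X, μ X X = 0)
    (hskew : ∀ X : V, LinearMap.adjoint (μ X) = -(μ X))
    (M : Module.End ℝ V)
    (hM : M = (1/4 : ℝ) • (∑ i, μ (b i) ∘ₗ μ (b i)))
    (A : Module.End ℝ V) (hA : LinearMap.IsSymmetric (A : V →ₗ[ℝ] V)) :
    bip b (deltaMap μ A) (deltaMap μ A) =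
      -4 * (∑ i, (inner ℝ (M (A (b i))) (A (b i)) : ℝ)) + eip (casOp b μ A) A := by
  have hMterm : -4 * ∑ i, ⟪M (A (b i)), A (b i)⟫ =
      ∑ i, ∑ j, ⟪μ (A (b i)) (b j), μ (A (b i)) (b j)⟫ := by
    simp only [hM, LinearMap.smul_apply, real_inner_smul_left,
      inner_sum_comp_apply_self b halt hskew, Finset.mul_sum]
    ring_nf
  rw [hMterm, eip_casOp_self b hskew hA, ← Finset.sum_add_distrib, bip]
  refine Finset.sum_congr rfl fun i _ => ?_
  have hdelta : ∀ j, deltaMap μ A (b i) (b j) = (μ (A (b i)) + opComm (μ (b i)) A) (b j) := by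
    intro j
    simp only [deltaMap, theta, opComm, LinearMap.add_apply, LinearMap.sub_apply,
      LinearMap.comp_apply]
    abel
  simp only [hdelta]
  exact sum_inner_add_apply_self_of_adjoint_eq_neg b (hskew _) (isSymmetric_opComm (hskew _) hA)
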